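/- Let n ≥ 1 be an integer and let q, ρ, τ be complex numbers with q ∉ {0, 1, −1}, 1 + ρq ≠ 0 and τ + q ≠ 0. Define the n×n matrices M and K by M_{i,j} = Σ_{k=1}^{2n−1} (−1)^{k+1} · (q^{k−2j+2} − q^{2j−k−2})/(q − q^{−1}) · C(n + k − i − 1, k − i) · [ C(n−2, k−j−1) + ((ρ+q)/(1+ρq) + (1+τq)/(τ+q)) · C(n−2, k−j) + ((ρ+q)(1+τq)/((1+ρq)(τ+q))) · C(n−2, k−j+1) ] and K_{i,j} = Σ_{k = −n+1}^{n} (−1)^{k+1} · (q^k − q^{−k})/(q − q^{−1}) · C(2j + k − 3, i − 1) · [ C(n−2, k+j−3) + ((ρ+q)/(1+ρq) + (1+τq)/(τ+q)) · C(n−2, k+j−2) + ((ρ+q)(1+τq)/((1+ρq)(τ+q))) · C(n−2, k+j−1) ]. Then det(M) = det(K). -/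

import Mathlib

open Finset

/-- Binomial coefficient of two integers, with `C a 0 = 1` for every integer `a`,
and `C a b = 0` whenever `b < 0` or (`b > 0` and `b > a`). -/
def intChoose (a b : ℤ) : ℤ :=
  if b = 0 then 1 else if 0 < b ∧ b ≤ a then (a.toNat.choose b.toNat : ℤ) else 0

/-!
Write `w_j(k) = (-1)^(k+1) [k-2j+2]_q W(k-j)`, where `W(s)` is the bracket
`C(n-2,s-1) + A C(n-2,s) + B C(n-2,s+1)`. Then `M_{ij} = Σ_k w_j(k) C(n+k-i-1, n-1)`, and the
shift `k ↦ k + 2j - 2` turns `K` into `K_{ij} = Σ_k w_j(k) C(k-1, i-1)`; the two ranges of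
summation differ only where `w_j` vanishes. The `r`-th forward difference of `x ↦ C(x, r+i)` is
`x ↦ C(x, i)`, so the rows `C(k-1, i-1)` are combinations of the rows `C(n+k-l-1, n-1)` with
`l ≥ i` and alternating binomial coefficients. Hence `K = P M` for an upper unitriangular `P`,
and `det K = det M`.
-/

open Fin

theorem intChoose_natCast (a b : ℕ) : intChoose a b = a.choose b := by
  unfold intChoose
  split_ifs with h0 h
  · simp_all
  · simp
  · rw [Nat.choose_eq_zero_of_lt (by omega)]; simp

theorem intChoose_of_neg {a b : ℤ} (hb : b < 0) : intChoose a b = 0 := by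
  unfold intChoose; split_ifs <;> first | rfl | omega

theorem intChoose_of_lt {a b : ℤ} (hb : 0 < b) (hab : a < b) : intChoose a b = 0 := by
  unfold intChoose; split_ifs <;> first | rfl | omega

theorem intChoose_sub_eq_choose (a c : ℕ) : intChoose a (a - c) = a.choose c := by
  rcases le_or_gt c a with h | h
  · rw [← Nat.cast_sub h, intChoose_natCast, Nat.choose_symm h]
  · rw [intChoose_of_neg (by omega), Nat.choose_eq_zero_of_lt h, Nat.cast_zero]

theorem sum_range_alternating_choose_mul_choose (r i y : ℕ) :
    ∑ m ∈ range (r + 1), (-1 : ℤ) ^ (r - m) * r.choose m * (y + m).choose (r + i) =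
      y.choose i := by
  have h := fwdDiff_iter_eq_sum_shift 1 (fun x : ℕ ↦ (x.choose (r + i) : ℤ)) r y
  rw [fwdDiff_iter_choose] at h
  simpa using h.symm

-- Entry `(i, l)` is `(-1)^(l-i) C(n-1-i, n-1-l)`.
def altChooseMatrix (n : ℕ) : Matrix (Fin n) (Fin n) ℤ :=
  Matrix.of fun i l ↦ (-1) ^ ((rev i : ℕ) - rev l) * ((rev i : ℕ).choose (rev l) : ℤ)

theorem det_altChooseMatrix (n : ℕ) : (altChooseMatrix n).det = 1 := by
  rw [Matrix.det_of_isUpperTriangular]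
  · simp [altChooseMatrix]
  · intro i l (hli : l < i)
    rw [altChooseMatrix, Matrix.of_apply, Nat.choose_eq_zero_of_lt (rev_lt_rev.2 hli),
      Nat.cast_zero, mul_zero]

theorem sum_altChooseMatrix_mul_choose {n : ℕ} (i : Fin n) (y : ℕ) :
    ∑ l, altChooseMatrix n i l * ((y + rev l : ℕ).choose (n - 1) : ℤ) = y.choose i := by
  rw [← Equiv.sum_comp revPerm]
  simp only [revPerm_apply, rev_rev, altChooseMatrix, Matrix.of_apply]
  rw [Fin.sum_univ_eq_sum_range
    (fun m ↦ (-1 : ℤ) ^ ((rev i : ℕ) - m) * (rev i : ℕ).choose m * (y + m).choose (n - 1)) n,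
    ← sum_subset (range_subset_range.2 (rev i).isLt) fun m _ hm ↦ by
    rw [Nat.choose_eq_zero_of_lt (by simpa using hm), Nat.cast_zero, mul_zero, zero_mul],
    show n - 1 = rev i + i by simp [val_rev]; omega, sum_range_alternating_choose_mul_choose]

theorem sum_altChooseMatrix_mul_intChoose {n : ℕ} (i : Fin n) {k : ℤ} (hk : 1 ≤ k) :
    ∑ l : Fin n, altChooseMatrix n i l * intChoose (n + k - (l + 1) - 1) (k - (l + 1)) =
      intChoose (k - 1) i := by
  obtain ⟨y, rfl⟩ : ∃ y : ℕ, k = y + 1 := ⟨(k - 1).toNat, by omega⟩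
  have hterm (l : Fin n) : intChoose (n + (y + 1) - (l + 1) - 1) ((y + 1) - (l + 1)) =
      ((y + rev l : ℕ).choose (n - 1) : ℤ) := by
    rw [← intChoose_sub_eq_choose]
    congr 1 <;> simp only [val_rev] <;> omega
  simp only [hterm, add_sub_cancel_right, intChoose_natCast, sum_altChooseMatrix_mul_choose]

noncomputable def qInt (q : ℂ) (m : ℤ) : ℂ := (q ^ m - q ^ (-m)) / (q - q⁻¹)

def chooseWindow (a : ℤ) (A B : ℂ) (s : ℤ) : ℂ :=
  (intChoose a (s - 1) : ℂ) + A * (intChoose a s : ℂ) + B * (intChoose a (s + 1) : ℂ)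

theorem chooseWindow_of_lt {a s : ℤ} (A B : ℂ) (hs : s < -1) : chooseWindow a A B s = 0 := by
  simp [chooseWindow, intChoose_of_neg, show s < 0 by omega, show s < 1 by omega,
    show s + 1 < 0 by omega]

theorem chooseWindow_of_gt {a s : ℤ} (A B : ℂ) (hs : 1 < s) (has : a + 1 < s) :
    chooseWindow a A B s = 0 := by
  simp [chooseWindow, intChoose_of_lt (a := a) (b := s - 1) (by omega) (by omega),
    intChoose_of_lt (a := a) (b := s) (by omega) (by omega),
    intChoose_of_lt (a := a) (b := s + 1) (by omega) (by omega)]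

noncomputable def colWeight (n : ℕ) (q A B : ℂ) (j k : ℤ) : ℂ :=
  (-1) ^ (k + 1) * qInt q (k - 2 * j + 2) * chooseWindow (n - 2) A B (k - j)

theorem colWeight_eq_zero {n : ℕ} (q A B : ℂ) {j k : ℤ} (hj : 1 ≤ j)
    (hk : k ≤ 0 ∨ k < j - 1 ∨ (n + j - 1 < k ∧ j + 1 < k)) : colWeight n q A B j k = 0 := by
  rcases lt_or_ge k (j - 1) with hlt | hge
  · rw [colWeight, chooseWindow_of_lt A B (by omega), mul_zero]
  obtain ⟨rfl, rfl⟩ | hbig : j = 1 ∧ k = 0 ∨ (n + j - 1 < k ∧ j + 1 < k) := by omega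
  · -- here the window need not vanish, but `[0]_q = 0`
    simp [colWeight, qInt]
  · rw [colWeight, chooseWindow_of_gt A B (by omega) (by omega), mul_zero]

theorem sum_Icc_colWeight_mul_eq {n : ℕ} (q A B : ℂ) {j : ℤ} (hj : 1 ≤ j) (hjn : j ≤ n)
    (c : ℤ → ℂ) :
    ∑ k ∈ Icc (1 : ℤ) (2 * n - 1), colWeight n q A B j k * c k =
      ∑ k ∈ Icc (2 * j - n - 1) (2 * j + n - 2), colWeight n q A B j k * c k := by
  apply sum_congr_of_eq_on_inter
  · intro k hk hk'
    rw [colWeight_eq_zero q A B hj (by simp only [mem_Icc] at hk hk'; omega), zero_mul]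
  · intro k hk hk'
    rw [colWeight_eq_zero q A B hj (by simp only [mem_Icc] at hk hk'; omega), zero_mul]
  · exact fun _ _ _ ↦ rfl

-- The matrices `M` and `K` of the statement, with arbitrary coefficients `A`, `B` in the brackets.
noncomputable def matM (n : ℕ) (q A B : ℂ) : Matrix (Fin n) (Fin n) ℂ :=
  Matrix.of fun i j ↦ ∑ k ∈ Icc (1 : ℤ) (2 * n - 1),
    (-1 : ℂ) ^ (k + 1) *
      ((q ^ (k - 2 * (j + 1) + 2) - q ^ (2 * (j + 1) - k - 2)) / (q - q⁻¹)) *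
      (intChoose (n + k - (i + 1) - 1) (k - (i + 1)) : ℂ) *
      ((intChoose (n - 2) (k - (j + 1) - 1) : ℂ) + A * (intChoose (n - 2) (k - (j + 1)) : ℂ) +
        B * (intChoose (n - 2) (k - (j + 1) + 1) : ℂ))

noncomputable def matK (n : ℕ) (q A B : ℂ) : Matrix (Fin n) (Fin n) ℂ :=
  Matrix.of fun i j ↦ ∑ k ∈ Icc (-(n : ℤ) + 1) n,
    (-1 : ℂ) ^ (k + 1) * ((q ^ k - q ^ (-k)) / (q - q⁻¹)) *
      (intChoose (2 * (j + 1) + k - 3) ((i + 1) - 1) : ℂ) *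
      ((intChoose (n - 2) (k + (j + 1) - 3) : ℂ) +
        A * (intChoose (n - 2) (k + (j + 1) - 2) : ℂ) +
        B * (intChoose (n - 2) (k + (j + 1) - 1) : ℂ))

section

variable {n : ℕ} {q A B : ℂ}

theorem matM_apply (i j : Fin n) :
    matM n q A B i j = ∑ k ∈ Icc (1 : ℤ) (2 * n - 1),
      colWeight n q A B (j + 1) k * intChoose (n + k - (i + 1) - 1) (k - (i + 1)) := by
  rw [matM, Matrix.of_apply]
  refine sum_congr rfl fun k _ ↦ ?_
  rw [colWeight, qInt, chooseWindow,
    show 2 * ((j : ℤ) + 1) - k - 2 = -(k - 2 * (j + 1) + 2) by ring]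
  ring

theorem matK_apply (i j : Fin n) :
    matK n q A B i j = ∑ k ∈ Icc (2 * (j + 1 : ℤ) - n - 1) (2 * (j + 1) + n - 2),
      colWeight n q A B (j + 1) k * intChoose (k - 1) i := by
  set c : ℤ := 2 * (j + 1) - 2 with hc
  rw [matK, Matrix.of_apply]
  refine sum_nbij' (· + c) (· - c) ?_ ?_ ?_ ?_ fun k _ ↦ ?_
  · intro k hk; simp only [mem_Icc] at hk ⊢; omega
  · intro k hk; simp only [mem_Icc] at hk ⊢; omega
  · exact fun k _ ↦ add_sub_cancel_right k c
  · exact fun k _ ↦ sub_add_cancel k c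
  have hsign : (-1 : ℂ) ^ (k + c + 1) = (-1) ^ (k + 1) := by
    rw [show k + c + 1 = (k + 1) + 2 * (j : ℤ) from by ring, zpow_add₀ (by norm_num),
      Even.neg_one_zpow (even_two_mul _), mul_one]
  rw [colWeight, hsign, qInt, chooseWindow, hc]
  ring_nf

theorem matK_eq_altChooseMatrix_mul_matM :
    matK n q A B = (altChooseMatrix n).map (fun x : ℤ ↦ (x : ℂ)) * matM n q A B := by
  ext i j
  have hj : 1 ≤ (j : ℤ) + 1 ∧ (j : ℤ) + 1 ≤ n := by omega
  calc matK n q A B i j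
      = ∑ k ∈ Icc (1 : ℤ) (2 * n - 1), colWeight n q A B (j + 1) k * intChoose (k - 1) i := by
        rw [matK_apply, sum_Icc_colWeight_mul_eq q A B hj.1 hj.2]
    _ = ∑ k ∈ Icc (1 : ℤ) (2 * n - 1), colWeight n q A B (j + 1) k * ∑ l : Fin n,
          (altChooseMatrix n i l : ℂ) * intChoose (n + k - (l + 1) - 1) (k - (l + 1)) := by
        refine sum_congr rfl fun k hk ↦ ?_
        rw [← sum_altChooseMatrix_mul_intChoose i (mem_Icc.1 hk).1]
        push_cast
        rfl
    _ = ((altChooseMatrix n).map (fun x : ℤ ↦ (x : ℂ)) * matM n q A B) i j := by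
        simp only [Matrix.mul_apply, Matrix.map_apply, matM_apply, mul_sum]
        rw [sum_comm]
        exact sum_congr rfl fun _ _ ↦ sum_congr rfl fun _ _ ↦ by ring

theorem det_matM_eq_det_matK : (matM n q A B).det = (matK n q A B).det := by
  rw [matK_eq_altChooseMatrix_mul_matM, Matrix.det_mul, ← Int.cast_det,
    det_altChooseMatrix, Int.cast_one, one_mul]

end

theorem det_M_eq_det_K_general (n : ℕ) (q ρ τ : ℂ) :
    (Matrix.of fun i j : Fin n =>
      ∑ k ∈ Finset.Icc (1 : ℤ) (2 * (n : ℤ) - 1),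
        (-1 : ℂ) ^ (k + 1) *
          ((q ^ (k - 2 * ((j : ℤ) + 1) + 2) - q ^ (2 * ((j : ℤ) + 1) - k - 2)) / (q - q⁻¹)) *
          (intChoose ((n : ℤ) + k - ((i : ℤ) + 1) - 1) (k - ((i : ℤ) + 1)) : ℂ) *
          ((intChoose ((n : ℤ) - 2) (k - ((j : ℤ) + 1) - 1) : ℂ)
            + ((ρ + q) / (1 + ρ * q) + (1 + τ * q) / (τ + q)) *
                (intChoose ((n : ℤ) - 2) (k - ((j : ℤ) + 1)) : ℂ)
            + ((ρ + q) * (1 + τ * q) / ((1 + ρ * q) * (τ + q))) *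
                (intChoose ((n : ℤ) - 2) (k - ((j : ℤ) + 1) + 1) : ℂ))).det =
    (Matrix.of fun i j : Fin n =>
      ∑ k ∈ Finset.Icc (-(n : ℤ) + 1) (n : ℤ),
        (-1 : ℂ) ^ (k + 1) * ((q ^ k - q ^ (-k)) / (q - q⁻¹)) *
          (intChoose (2 * ((j : ℤ) + 1) + k - 3) (((i : ℤ) + 1) - 1) : ℂ) *
          ((intChoose ((n : ℤ) - 2) (k + ((j : ℤ) + 1) - 3) : ℂ)
            + ((ρ + q) / (1 + ρ * q) + (1 + τ * q) / (τ + q)) *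
                (intChoose ((n : ℤ) - 2) (k + ((j : ℤ) + 1) - 2) : ℂ)
            + ((ρ + q) * (1 + τ * q) / ((1 + ρ * q) * (τ + q))) *
                (intChoose ((n : ℤ) - 2) (k + ((j : ℤ) + 1) - 1) : ℂ))).det :=
  det_matM_eq_det_matK

theorem det_M_eq_det_K (n : ℕ) (hn : 1 ≤ n) (q ρ τ : ℂ)
    (hq0 : q ≠ 0) (hq1 : q ≠ 1) (hqm1 : q ≠ -1)
    (hρ : 1 + ρ * q ≠ 0) (hτ : τ + q ≠ 0) :
    (Matrix.of fun i j : Fin n =>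
      ∑ k ∈ Finset.Icc (1 : ℤ) (2 * (n : ℤ) - 1),
        (-1 : ℂ) ^ (k + 1) *
          ((q ^ (k - 2 * ((j : ℤ) + 1) + 2) - q ^ (2 * ((j : ℤ) + 1) - k - 2)) / (q - q⁻¹)) *
          (intChoose ((n : ℤ) + k - ((i : ℤ) + 1) - 1) (k - ((i : ℤ) + 1)) : ℂ) *
          ((intChoose ((n : ℤ) - 2) (k - ((j : ℤ) + 1) - 1) : ℂ)
            + ((ρ + q) / (1 + ρ * q) + (1 + τ * q) / (τ + q)) *
                (intChoose ((n : ℤ) - 2) (k - ((j : ℤ) + 1)) : ℂ)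
            + ((ρ + q) * (1 + τ * q) / ((1 + ρ * q) * (τ + q))) *
                (intChoose ((n : ℤ) - 2) (k - ((j : ℤ) + 1) + 1) : ℂ))).det =
    (Matrix.of fun i j : Fin n =>
      ∑ k ∈ Finset.Icc (-(n : ℤ) + 1) (n : ℤ),
        (-1 : ℂ) ^ (k + 1) * ((q ^ k - q ^ (-k)) / (q - q⁻¹)) *
          (intChoose (2 * ((j : ℤ) + 1) + k - 3) (((i : ℤ) + 1) - 1) : ℂ) *
          ((intChoose ((n : ℤ) - 2) (k + ((j : ℤ) + 1) - 3) : ℂ)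
            + ((ρ + q) / (1 + ρ * q) + (1 + τ * q) / (τ + q)) *
                (intChoose ((n : ℤ) - 2) (k + ((j : ℤ) + 1) - 2) : ℂ)
            + ((ρ + q) * (1 + τ * q) / ((1 + ρ * q) * (τ + q))) *
                (intChoose ((n : ℤ) - 2) (k + ((j : ℤ) + 1) - 1) : ℂ))).det :=
  det_M_eq_det_K_general n q ρ τ
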